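/- arXiv:math/0010109 — 3 statements merged into one kernel-verified Lean document; each statement's English description precedes it below -/
import Mathlib

section
/- Let w ∈ Sₙ and let (a₁,...,a_p) and (b₁,...,b_p) be any two reduced words for w. Then the composed operators ∂_{a₁}∘∂_{a₂}∘···∘∂_{a_p} and ∂_{b₁}∘∂_{b₂}∘···∘∂_{b_p} on ℚ[x₁,...,xₙ] are equal; in particular the operator ∂_w := ∂_{a₁}∘···∘∂_{a_p} is well defined, independently of the choice of reduced word for w. -/
open MvPolynomial

/-- The adjacent transposition sᵢ ∈ Sₙ (0-indexed: swaps positions i and i+1). -/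
def sAdj (n : ℕ) (i : ℕ) : Equiv.Perm (Fin n) :=
  if h : i + 1 < n then Equiv.swap ⟨i, Nat.lt_of_succ_lt h⟩ ⟨i + 1, h⟩ else 1

/-- The length ℓ(w): the number of inversions of w. -/
def lengthPerm {n : ℕ} (w : Equiv.Perm (Fin n)) : ℕ :=
  (Finset.univ.filter (fun p : Fin n × Fin n => p.1 < p.2 ∧ w p.2 < w p.1)).card

/-- A reduced word for w: a list of letters (0-indexed) whose simple reflections multiply
to w, of length ℓ(w). -/
def IsReducedWord (n : ℕ) (w : Equiv.Perm (Fin n)) (L : List ℕ) : Prop :=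
  (∀ a ∈ L, a + 1 < n) ∧ (L.map (sAdj n)).prod = w ∧ L.length = lengthPerm w

open Classical in
/-- The divided difference operator ∂ᵢ (0-indexed): ∂ᵢ f = (f − sᵢ·f)/(xᵢ − xᵢ₊₁). -/
noncomputable def divDiff {n : ℕ} (i : ℕ) (f : MvPolynomial (Fin n) ℚ) : MvPolynomial (Fin n) ℚ :=
  if h : i + 1 < n then
    if hd : (X ⟨i, Nat.lt_of_succ_lt h⟩ - X ⟨i + 1, h⟩ : MvPolynomial (Fin n) ℚ) ∣
        (f - rename (Equiv.swap ⟨i, Nat.lt_of_succ_lt h⟩ ⟨i + 1, h⟩) f) then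
      hd.choose
    else 0
  else 0

/-- The staircase monomial x₁^{n-1} x₂^{n-2} ⋯ x_{n-1}. -/
noncomputable def staircase (n : ℕ) : MvPolynomial (Fin n) ℚ :=
  ∏ i : Fin n, X i ^ (n - 1 - (i : ℕ))

/-!
Induction on `ℓ(w)`. Two reduced words of `w` with the same first letter `a` give the same
operator by induction applied to `sₐ w`. If the first letters `a < b` differ, both are left
descents of `w`, so `w` also has reduced words `a b R`, `b a R` (when `b > a + 1`) or
`a b a R`, `b a b R` (when `b = a + 1`) with a common tail `R`. These give the same operator by
the commutation and braid relations of divided differences, and each agrees with the given word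
of the same first letter by induction. The braid relation is checked after multiplying by the
product of the three roots `(xᵤ - xᵥ)(xᵥ - x_z)(xᵤ - x_z)`: both sides become the alternating sum
of `π · f` over the six permutations `π` of `{u, v, z}`.
-/

theorem Equiv.swap_braid {α : Type*} [DecidableEq α] {u v z : α} (h : [u, v, z].Nodup) :
    swap u v * swap v z * swap u v = swap v z * swap u v * swap v z := by
  simp only [List.nodup_cons, List.mem_cons, List.not_mem_nil, or_false, not_or] at h
  obtain ⟨⟨huv, huz⟩, hvz, -⟩ := h
  rw [swap_mul_swap_mul_swap huv huz, swap_comm u v, swap_comm v z,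
    swap_mul_swap_mul_swap (Ne.symm hvz) (Ne.symm huz), swap_comm]

namespace MvPolynomial

variable {σ R : Type*} [CommRing R]

theorem X_sub_X_ne_zero [Nontrivial R] {u v : σ} (h : u ≠ v) :
    (X u - X v : MvPolynomial σ R) ≠ 0 :=
  sub_ne_zero.mpr (X_injective.ne h)

theorem rename_rename_perm (e₁ e₂ : Equiv.Perm σ) (f : MvPolynomial σ R) :
    rename e₁ (rename e₂ f) = rename ⇑(e₁ * e₂) f := by
  rw [rename_rename, Equiv.Perm.coe_mul]

variable [DecidableEq σ]

theorem X_sub_X_dvd_X_sub_X_swap (u v k : σ) :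
    (X u - X v : MvPolynomial σ R) ∣ X k - X (Equiv.swap u v k) := by
  rw [Equiv.swap_apply_def]
  split_ifs with hu hv
  · rw [hu]
  · rw [hv]
    exact ⟨-1, by ring⟩
  · simp

theorem X_sub_X_dvd_sub_rename_swap (u v : σ) (f : MvPolynomial σ R) :
    X u - X v ∣ f - rename (Equiv.swap u v) f := by
  induction f using MvPolynomial.induction_on with
  | C a => simp
  | add p q hp hq => simpa only [map_add, add_sub_add_comm] using dvd_add hp hq
  | mul_X p k hp =>
    have h : p * X k - rename (Equiv.swap u v) (p * X k) =
        (p - rename (Equiv.swap u v) p) * X k +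
          rename (Equiv.swap u v) p * (X k - X (Equiv.swap u v k)) := by
      rw [map_mul, rename_X]; ring
    rw [h]
    exact dvd_add (hp.mul_right _) ((X_sub_X_dvd_X_sub_X_swap u v k).mul_left _)

noncomputable def swapDivDiff (u v : σ) (f : MvPolynomial σ R) : MvPolynomial σ R :=
  (X_sub_X_dvd_sub_rename_swap u v f).choose

theorem X_sub_X_mul_swapDivDiff (u v : σ) (f : MvPolynomial σ R) :
    (X u - X v) * swapDivDiff u v f = f - rename (Equiv.swap u v) f :=
  (X_sub_X_dvd_sub_rename_swap u v f).choose_spec.symm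

theorem X_sub_X_mul_swapDivDiff_swapDivDiff {u v p q : σ}
    (h : rename (Equiv.swap u v) (X p - X q : MvPolynomial σ R) = X p - X q)
    (f : MvPolynomial σ R) :
    (X u - X v) * (X p - X q) * swapDivDiff u v (swapDivDiff p q f) =
      f - rename (Equiv.swap p q) f - rename (Equiv.swap u v) f +
        rename (Equiv.swap u v) (rename (Equiv.swap p q) f) := by
  have hA := X_sub_X_mul_swapDivDiff p q f
  have hB := X_sub_X_mul_swapDivDiff u v (swapDivDiff p q f)
  have hsA := congrArg (rename (Equiv.swap u v)) hA
  rw [map_mul, h, map_sub] at hsA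
  linear_combination (X p - X q) * hB + hA - hsA

variable [IsDomain R]

theorem rename_swap_swapDivDiff (u v : σ) (f : MvPolynomial σ R) :
    rename (Equiv.swap u v) (swapDivDiff u v f) = swapDivDiff u v f := by
  obtain rfl | huv := eq_or_ne u v
  · rw [Equiv.swap_self, Equiv.coe_refl, rename_id_apply]
  have h := congrArg (rename (Equiv.swap u v)) (X_sub_X_mul_swapDivDiff u v f)
  rw [map_mul, map_sub, rename_X, rename_X, Equiv.swap_apply_left, Equiv.swap_apply_right,
    map_sub, rename_rename_perm, Equiv.swap_mul_self, Equiv.Perm.coe_one, rename_id_apply] at h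
  refine mul_left_cancel₀ (X_sub_X_ne_zero huv) ?_
  linear_combination -h - X_sub_X_mul_swapDivDiff u v f

/-- The roots `X u - X v` and `X p - X q` of the two transpositions form a root system of
type `A₂`: each transposition maps the other root to the sum of both. -/
theorem X_sub_X_mul_swapDivDiff_braid {u v p q : σ}
    (h₁ : rename (Equiv.swap u v) (X p - X q : MvPolynomial σ R) = X u - X v + (X p - X q))
    (h₂ : rename (Equiv.swap p q) (X u - X v : MvPolynomial σ R) = X u - X v + (X p - X q))
    (f : MvPolynomial σ R) :
    (X u - X v) * (X p - X q) * (X u - X v + (X p - X q)) *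
        swapDivDiff u v (swapDivDiff p q (swapDivDiff u v f)) =
      f - rename (Equiv.swap u v) f - rename (Equiv.swap p q) f +
        rename (Equiv.swap p q) (rename (Equiv.swap u v) f) +
        rename (Equiv.swap u v) (rename (Equiv.swap p q) f) -
        rename (Equiv.swap u v) (rename (Equiv.swap p q) (rename (Equiv.swap u v) f)) := by
  have hs : rename (Equiv.swap u v) (X u - X v : MvPolynomial σ R) = -(X u - X v) := by
    simp [Equiv.swap_apply_left, Equiv.swap_apply_right]
  have hA := X_sub_X_mul_swapDivDiff u v f
  have hB := X_sub_X_mul_swapDivDiff p q (swapDivDiff u v f)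
  have hC := X_sub_X_mul_swapDivDiff u v (swapDivDiff p q (swapDivDiff u v f))
  have hsB := congrArg (rename (Equiv.swap u v)) hB
  have htA := congrArg (rename (Equiv.swap p q)) hA
  have hstA := congrArg (rename (Equiv.swap u v)) htA
  simp only [map_mul, map_sub, map_add, hs, h₁, h₂, rename_swap_swapDivDiff] at hsB htA hstA
  linear_combination (X p - X q) * (X u - X v + (X p - X q)) * hC
    + (X u - X v + (X p - X q)) * hB - (X p - X q) * hsB + hA - htA + hstA

theorem swapDivDiff_comm {u v p q : σ} (h : [u, v, p, q].Nodup) (f : MvPolynomial σ R) :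
    swapDivDiff u v (swapDivDiff p q f) = swapDivDiff p q (swapDivDiff u v f) := by
  simp only [List.nodup_cons, List.mem_cons, List.not_mem_nil, or_false, not_or] at h
  obtain ⟨⟨huv, hup, huq⟩, ⟨hvp, hvq⟩, hpq, -⟩ := h
  have hs : rename (Equiv.swap u v) (X p - X q : MvPolynomial σ R) = X p - X q := by
    rw [map_sub, rename_X, rename_X, Equiv.swap_apply_of_ne_of_ne (Ne.symm hup) (Ne.symm hvp),
      Equiv.swap_apply_of_ne_of_ne (Ne.symm huq) (Ne.symm hvq)]
  have ht : rename (Equiv.swap p q) (X u - X v : MvPolynomial σ R) = X u - X v := by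
    rw [map_sub, rename_X, rename_X, Equiv.swap_apply_of_ne_of_ne hup huq,
      Equiv.swap_apply_of_ne_of_ne hvp hvq]
  have hst : Equiv.swap u v * Equiv.swap p q = Equiv.swap p q * Equiv.swap u v :=
    (Equiv.Perm.disjoint_swap_swap (by simp [*])).commute
  refine mul_left_cancel₀ (mul_ne_zero (X_sub_X_ne_zero huv) (X_sub_X_ne_zero hpq)) ?_
  rw [X_sub_X_mul_swapDivDiff_swapDivDiff hs, mul_comm (X u - X v),
    X_sub_X_mul_swapDivDiff_swapDivDiff ht, rename_rename_perm, rename_rename_perm, hst]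
  ring

theorem swapDivDiff_braid {u v z : σ} (h : [u, v, z].Nodup) (f : MvPolynomial σ R) :
    swapDivDiff u v (swapDivDiff v z (swapDivDiff u v f)) =
      swapDivDiff v z (swapDivDiff u v (swapDivDiff v z f)) := by
  have hsts := Equiv.swap_braid h
  simp only [List.nodup_cons, List.mem_cons, List.not_mem_nil, or_false, not_or] at h
  obtain ⟨⟨huv, huz⟩, hvz, -⟩ := h
  have hs : rename (Equiv.swap u v) (X v - X z : MvPolynomial σ R) = X u - X v + (X v - X z) := by
    rw [map_sub, rename_X, rename_X, Equiv.swap_apply_right,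
      Equiv.swap_apply_of_ne_of_ne (Ne.symm huz) (Ne.symm hvz), sub_add_sub_cancel]
  have ht : rename (Equiv.swap v z) (X u - X v : MvPolynomial σ R) = X u - X v + (X v - X z) := by
    rw [map_sub, rename_X, rename_X, Equiv.swap_apply_left,
      Equiv.swap_apply_of_ne_of_ne huv huz, sub_add_sub_cancel]
  have hne : (X u - X v) * (X v - X z) * (X u - X v + (X v - X z)) ≠ (0 : MvPolynomial σ R) := by
    rw [sub_add_sub_cancel]
    exact mul_ne_zero (mul_ne_zero (X_sub_X_ne_zero huv) (X_sub_X_ne_zero hvz))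
      (X_sub_X_ne_zero huz)
  refine mul_left_cancel₀ hne ?_
  have key := X_sub_X_mul_swapDivDiff_braid (ht.trans (add_comm _ _)) (hs.trans (add_comm _ _)) f
  rw [X_sub_X_mul_swapDivDiff_braid hs ht]
  simp only [rename_rename_perm, ← mul_assoc, hsts] at key ⊢
  linear_combination -key

end MvPolynomial

section

variable {n : ℕ}

theorem divDiff_eq_swapDivDiff {a : ℕ} (h : a + 1 < n) (f : MvPolynomial (Fin n) ℚ) :
    divDiff a f = swapDivDiff ⟨a, by omega⟩ ⟨a + 1, h⟩ f := by
  rw [divDiff, dif_pos h, dif_pos (X_sub_X_dvd_sub_rename_swap _ _ f)]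
  rfl

theorem divDiff_comm {a b : ℕ} (hab : a + 1 < b) (hb : b + 1 < n) (f : MvPolynomial (Fin n) ℚ) :
    divDiff a (divDiff b f) = divDiff b (divDiff a f) := by
  simp only [divDiff_eq_swapDivDiff hb, divDiff_eq_swapDivDiff (by omega : a + 1 < n)]
  exact swapDivDiff_comm (by simp [Fin.ext_iff]; omega) f

theorem divDiff_braid {a : ℕ} (h : a + 2 < n) (f : MvPolynomial (Fin n) ℚ) :
    divDiff a (divDiff (a + 1) (divDiff a f)) =
      divDiff (a + 1) (divDiff a (divDiff (a + 1) f)) := by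
  simp only [divDiff_eq_swapDivDiff h, divDiff_eq_swapDivDiff (by omega : a + 1 < n)]
  exact swapDivDiff_braid (by simp [Fin.ext_iff]; omega) f

theorem sAdj_of_lt {a : ℕ} (h : a + 1 < n) : sAdj n a = Equiv.swap ⟨a, by omega⟩ ⟨a + 1, h⟩ :=
  dif_pos h

theorem sAdj_of_not_lt {a : ℕ} (h : ¬a + 1 < n) : sAdj n a = 1 :=
  dif_neg h

theorem sAdj_mul_self (a : ℕ) : sAdj n a * sAdj n a = 1 := by
  unfold sAdj
  split_ifs <;> simp

theorem lengthPerm_one : lengthPerm (1 : Equiv.Perm (Fin n)) = 0 := by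
  simp only [lengthPerm, Equiv.Perm.one_apply]
  exact Finset.card_eq_zero.2 (Finset.filter_eq_empty_iff.2 fun _ _ h => lt_asymm h.1 h.2)

theorem sAdj_apply_lt_sAdj_apply_iff {a : ℕ} (h : a + 1 < n) {x y : Fin n} :
    sAdj n a x < sAdj n a y ↔
      x < y ∧ ¬(x = ⟨a, by omega⟩ ∧ y = ⟨a + 1, h⟩) ∨ x = ⟨a + 1, h⟩ ∧ y = ⟨a, by omega⟩ := by
  simp only [sAdj_of_lt h, Equiv.swap_apply_def, Fin.ext_iff]
  split_ifs <;> simp only [Fin.lt_def] <;> omega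

/-- Left-multiplying by `sAdj n a` exchanges the values `a` and `a + 1`, which creates exactly
the inversion at the pair of positions `(w⁻¹ a, w⁻¹ (a + 1))`. -/
theorem lengthPerm_sAdj_mul_of_lt {a : ℕ} (h : a + 1 < n) {w : Equiv.Perm (Fin n)}
    (hw : w⁻¹ ⟨a, by omega⟩ < w⁻¹ ⟨a + 1, h⟩) :
    lengthPerm (sAdj n a * w) = lengthPerm w + 1 := by
  set u : Fin n := ⟨a, by omega⟩
  set v : Fin n := ⟨a + 1, h⟩
  have hins : Finset.univ.filter (fun p : Fin n × Fin n => p.1 < p.2 ∧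
        (sAdj n a * w) p.2 < (sAdj n a * w) p.1) =
      insert (w⁻¹ u, w⁻¹ v)
        (Finset.univ.filter fun p : Fin n × Fin n => p.1 < p.2 ∧ w p.2 < w p.1) := by
    ext ⟨i, j⟩
    have hvu : w i = v → w j = u → j < i := fun hi hj => by
      rwa [Equiv.Perm.eq_inv_iff_eq.2 hi, Equiv.Perm.eq_inv_iff_eq.2 hj]
    have huv : w i = u → w j = v → i < j ∧ ¬w j < w i := fun hi hj => by
      rw [hi, hj, Equiv.Perm.eq_inv_iff_eq.2 hi, Equiv.Perm.eq_inv_iff_eq.2 hj]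
      exact ⟨hw, by simp [u, v]⟩
    simp only [Finset.mem_filter, Finset.mem_univ, true_and, Finset.mem_insert, Prod.mk.injEq,
      Equiv.Perm.mul_apply, sAdj_apply_lt_sAdj_apply_iff h, Equiv.Perm.eq_inv_iff_eq]
    constructor
    · rintro ⟨hij, ⟨hlt, -⟩ | ⟨hj, hi⟩⟩
      · exact .inr ⟨hij, hlt⟩
      · exact .inl ⟨hi, hj⟩
    · rintro (⟨hi, hj⟩ | ⟨hij, hlt⟩)
      · exact ⟨(huv hi hj).1, .inr ⟨hj, hi⟩⟩
      · exact ⟨hij, .inl ⟨hlt, fun ⟨hj, hi⟩ => lt_asymm hij (hvu hi hj)⟩⟩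
  rw [lengthPerm, lengthPerm, hins, Finset.card_insert_of_notMem]
  simp [u, v]

theorem sAdj_mul_inv_apply_left {a : ℕ} (h : a + 1 < n) (w : Equiv.Perm (Fin n)) :
    (sAdj n a * w)⁻¹ ⟨a, by omega⟩ = w⁻¹ ⟨a + 1, h⟩ := by
  rw [sAdj_of_lt h, mul_inv_rev, Equiv.swap_inv, Equiv.Perm.mul_apply, Equiv.swap_apply_left]

theorem sAdj_mul_inv_apply_right {a : ℕ} (h : a + 1 < n) (w : Equiv.Perm (Fin n)) :
    (sAdj n a * w)⁻¹ ⟨a + 1, h⟩ = w⁻¹ ⟨a, by omega⟩ := by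
  rw [sAdj_of_lt h, mul_inv_rev, Equiv.swap_inv, Equiv.Perm.mul_apply, Equiv.swap_apply_right]

theorem sAdj_mul_inv_apply_of_ne {a x : ℕ} (hx : x < n) (ha : x ≠ a) (ha' : x ≠ a + 1)
    (w : Equiv.Perm (Fin n)) : (sAdj n a * w)⁻¹ ⟨x, hx⟩ = w⁻¹ ⟨x, hx⟩ := by
  unfold sAdj
  split_ifs
  · rw [mul_inv_rev, Equiv.swap_inv, Equiv.Perm.mul_apply,
      Equiv.swap_apply_of_ne_of_ne (by simpa [Fin.ext_iff]) (by simpa [Fin.ext_iff])]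
  · rw [one_mul]

theorem sAdj_comm {a b : ℕ} (hab : a + 1 < b) : sAdj n a * sAdj n b = sAdj n b * sAdj n a := by
  by_cases hb : b + 1 < n
  · rw [sAdj_of_lt hb, sAdj_of_lt (by omega : a + 1 < n)]
    exact (Equiv.Perm.disjoint_swap_swap (by simp [Fin.ext_iff]; omega)).commute
  · rw [sAdj_of_not_lt hb, one_mul, mul_one]

theorem sAdj_braid {a : ℕ} (h : a + 2 < n) :
    sAdj n a * sAdj n (a + 1) * sAdj n a = sAdj n (a + 1) * sAdj n a * sAdj n (a + 1) := by
  rw [sAdj_of_lt (by omega : a + 1 < n), sAdj_of_lt h]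
  exact Equiv.swap_braid (by simp [Fin.ext_iff]; omega)

def IsLeftDescent (w : Equiv.Perm (Fin n)) (a : ℕ) : Prop :=
  ∃ h : a + 1 < n, w⁻¹ ⟨a + 1, h⟩ < w⁻¹ ⟨a, by omega⟩

theorem not_isLeftDescent_iff {a : ℕ} (h : a + 1 < n) {w : Equiv.Perm (Fin n)} :
    ¬IsLeftDescent w a ↔ w⁻¹ ⟨a, by omega⟩ < w⁻¹ ⟨a + 1, h⟩ := by
  have hne : w⁻¹ ⟨a, by omega⟩ ≠ w⁻¹ ⟨a + 1, h⟩ := by simp [Fin.ext_iff]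
  simp only [IsLeftDescent, h, exists_true_left, not_lt]
  exact hne.le_iff_lt

theorem IsLeftDescent.lengthPerm_sAdj_mul {a : ℕ} {w : Equiv.Perm (Fin n)}
    (hd : IsLeftDescent w a) : lengthPerm (sAdj n a * w) + 1 = lengthPerm w := by
  obtain ⟨h, hd⟩ := hd
  have := lengthPerm_sAdj_mul_of_lt h (w := sAdj n a * w)
    (by rwa [sAdj_mul_inv_apply_left, sAdj_mul_inv_apply_right])
  rwa [← mul_assoc, sAdj_mul_self, one_mul, eq_comm] at this

theorem lengthPerm_sAdj_mul_le (a : ℕ) (w : Equiv.Perm (Fin n)) :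
    lengthPerm (sAdj n a * w) ≤ lengthPerm w + 1 := by
  by_cases h : a + 1 < n
  · by_cases hd : IsLeftDescent w a
    · linarith [hd.lengthPerm_sAdj_mul]
    · exact (lengthPerm_sAdj_mul_of_lt h ((not_isLeftDescent_iff h).1 hd)).le
  · rw [sAdj_of_not_lt h, one_mul]
    exact Nat.le_succ _

theorem lengthPerm_prod_le (L : List ℕ) : lengthPerm (L.map (sAdj n)).prod ≤ L.length := by
  induction L with
  | nil => simp [lengthPerm_one]
  | cons a L ih =>
    rw [List.map_cons, List.prod_cons, List.length_cons]
    exact (lengthPerm_sAdj_mul_le a _).trans (Nat.add_le_add_right ih 1)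

theorem isReducedWord_cons_iff {a : ℕ} {T : List ℕ} {w : Equiv.Perm (Fin n)} :
    IsReducedWord n w (a :: T) ↔ IsLeftDescent w a ∧ IsReducedWord n (sAdj n a * w) T := by
  constructor
  · rintro ⟨hval, hprod, hlen⟩
    have ha : a + 1 < n := hval a List.mem_cons_self
    have hT : (T.map (sAdj n)).prod = sAdj n a * w := by
      rw [← hprod, List.map_cons, List.prod_cons, ← mul_assoc, sAdj_mul_self, one_mul]
    have hle := hT ▸ lengthPerm_prod_le (n := n) T
    rw [List.length_cons] at hlen
    have hd : IsLeftDescent w a := by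
      by_contra hd
      have := lengthPerm_sAdj_mul_of_lt ha ((not_isLeftDescent_iff ha).1 hd)
      omega
    have := hd.lengthPerm_sAdj_mul
    exact ⟨hd, fun b hb => hval b (List.mem_cons_of_mem a hb), hT, by omega⟩
  · rintro ⟨hd, hval, hprod, hlen⟩
    refine ⟨?_, ?_, ?_⟩
    · simpa [List.mem_cons, forall_eq_or_imp] using ⟨hd.1, hval⟩
    · rw [List.map_cons, List.prod_cons, hprod, ← mul_assoc, sAdj_mul_self, one_mul]
    · rw [List.length_cons, hlen, hd.lengthPerm_sAdj_mul]

theorem exists_isLeftDescent {w : Equiv.Perm (Fin n)} (hw : w ≠ 1) : ∃ a, IsLeftDescent w a := by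
  by_contra! hnd
  apply hw
  obtain _ | m := n
  · exact Subsingleton.elim _ _
  have hmono : StrictMono ⇑w⁻¹ :=
    Fin.strictMono_iff_lt_succ.2 fun i => (not_isLeftDescent_iff (by omega)).1 (hnd i)
  exact inv_eq_one.1 (Equiv.ext fun x => congrFun hmono.eq_id x)

theorem exists_isReducedWord (w : Equiv.Perm (Fin n)) : ∃ L, IsReducedWord n w L := by
  induction hk : lengthPerm w using Nat.strong_induction_on generalizing w with
  | _ k ih =>
    obtain rfl | hw := eq_or_ne w 1
    · exact ⟨[], by simp, by simp, by simp [lengthPerm_one]⟩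
    obtain ⟨a, hd⟩ := exists_isLeftDescent hw
    obtain ⟨L, hL⟩ := ih _ (by rw [← hk, ← hd.lengthPerm_sAdj_mul]; omega) (sAdj n a * w) rfl
    exact ⟨a :: L, isReducedWord_cons_iff.2 ⟨hd, hL⟩⟩

theorem exists_isReducedWord_comm_prefix {a b : ℕ} {w : Equiv.Perm (Fin n)} (hab : a + 1 < b)
    (ha : IsLeftDescent w a) (hb : IsLeftDescent w b) :
    ∃ R, IsReducedWord n w (a :: b :: R) ∧ IsReducedWord n w (b :: a :: R) := by
  obtain ⟨R, hR⟩ := exists_isReducedWord (sAdj n b * (sAdj n a * w))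
  have hb' : IsLeftDescent (sAdj n a * w) b := ⟨hb.1, by
    simp (disch := omega) only [sAdj_mul_inv_apply_of_ne]
    exact hb.2⟩
  have ha' : IsLeftDescent (sAdj n b * w) a := ⟨ha.1, by
    simp (disch := omega) only [sAdj_mul_inv_apply_of_ne]
    exact ha.2⟩
  refine ⟨R, ?_, ?_⟩
  · simp only [isReducedWord_cons_iff]
    exact ⟨ha, hb', hR⟩
  · simp only [isReducedWord_cons_iff]
    rw [← mul_assoc, ← sAdj_comm hab, mul_assoc] at hR
    exact ⟨hb, ha', hR⟩

theorem exists_isReducedWord_braid_prefix {a : ℕ} {w : Equiv.Perm (Fin n)}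
    (ha : IsLeftDescent w a) (hb : IsLeftDescent w (a + 1)) :
    ∃ R, IsReducedWord n w (a :: (a + 1) :: a :: R) ∧
      IsReducedWord n w ((a + 1) :: a :: (a + 1) :: R) := by
  obtain ⟨h₁, ha⟩ := ha
  obtain ⟨h₂, hb⟩ := hb
  obtain ⟨R, hR⟩ := exists_isReducedWord (sAdj n a * (sAdj n (a + 1) * (sAdj n a * w)))
  refine ⟨R, ?_, ?_⟩
  · simp only [isReducedWord_cons_iff]
    refine ⟨⟨h₁, ha⟩, ⟨h₂, ?_⟩, ⟨h₁, ?_⟩, hR⟩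
    · simp (disch := omega) only [sAdj_mul_inv_apply_right, sAdj_mul_inv_apply_of_ne]
      exact hb.trans ha
    · simp (disch := omega) only [sAdj_mul_inv_apply_left, sAdj_mul_inv_apply_of_ne]
      exact hb
  · simp only [isReducedWord_cons_iff]
    simp only [← mul_assoc, ← sAdj_braid h₂] at hR ⊢
    refine ⟨⟨h₂, hb⟩, ⟨h₁, ?_⟩, ⟨h₂, ?_⟩, by simpa only [mul_assoc] using hR⟩
    · simp (disch := omega) only [sAdj_mul_inv_apply_left, sAdj_mul_inv_apply_of_ne]
      exact hb.trans ha
    · simp (disch := omega) only [mul_assoc, sAdj_mul_inv_apply_right, sAdj_mul_inv_apply_of_ne]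
      exact ha

theorem exists_isReducedWord_foldr_divDiff_eq {a b : ℕ} {w : Equiv.Perm (Fin n)} (hab : a < b)
    (ha : IsLeftDescent w a) (hb : IsLeftDescent w b) :
    ∃ W₁ W₂, IsReducedWord n w (a :: W₁) ∧ IsReducedWord n w (b :: W₂) ∧
      ∀ f : MvPolynomial (Fin n) ℚ, (a :: W₁).foldr divDiff f = (b :: W₂).foldr divDiff f := by
  obtain rfl | hab := (Nat.succ_le_of_lt hab).eq_or_lt
  · obtain ⟨R, h₁, h₂⟩ := exists_isReducedWord_braid_prefix ha hb
    exact ⟨_, _, h₁, h₂, fun f => divDiff_braid hb.1 _⟩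
  · obtain ⟨R, h₁, h₂⟩ := exists_isReducedWord_comm_prefix hab ha hb
    exact ⟨_, _, h₁, h₂, fun f => divDiff_comm hab hb.1 _⟩

end

theorem divDiff_word_well_defined (n : ℕ) (w : Equiv.Perm (Fin n)) (L₁ L₂ : List ℕ)
    (h₁ : IsReducedWord n w L₁) (h₂ : IsReducedWord n w L₂)
    (f : MvPolynomial (Fin n) ℚ) :
    L₁.foldr divDiff f = L₂.foldr divDiff f := by
  induction hk : lengthPerm w generalizing w L₁ L₂ with
  | zero =>
    rw [List.eq_nil_of_length_eq_zero (h₁.2.2.trans hk),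
      List.eq_nil_of_length_eq_zero (h₂.2.2.trans hk)]
  | succ k ih =>
    have same_head : ∀ c T T', IsReducedWord n w (c :: T) → IsReducedWord n w (c :: T') →
        (c :: T).foldr divDiff f = (c :: T').foldr divDiff f := by
      intro c T T' hT hT'
      rw [isReducedWord_cons_iff] at hT hT'
      have := hT.1.lengthPerm_sAdj_mul
      rw [List.foldr_cons, List.foldr_cons, ih _ T T' hT.2 hT'.2 (by omega)]
    obtain _ | ⟨a, T₁⟩ := L₁
    · exact absurd (h₁.2.2.trans hk) (by simp)
    obtain _ | ⟨b, T₂⟩ := L₂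
    · exact absurd (h₂.2.2.trans hk) (by simp)
    have ha := (isReducedWord_cons_iff.1 h₁).1
    have hb := (isReducedWord_cons_iff.1 h₂).1
    rcases lt_trichotomy a b with hab | rfl | hab
    · obtain ⟨W₁, W₂, hW₁, hW₂, hW⟩ := exists_isReducedWord_foldr_divDiff_eq hab ha hb
      rw [same_head _ _ _ h₁ hW₁, hW, same_head _ _ _ hW₂ h₂]
    · exact same_head _ _ _ h₁ h₂
    · obtain ⟨W₂, W₁, hW₂, hW₁, hW⟩ := exists_isReducedWord_foldr_divDiff_eq hab hb ha
      rw [same_head _ _ _ h₁ hW₁, ← hW, same_head _ _ _ hW₂ h₂]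
end

section
/- Let r, m be positive integers. Every cell (i,j) of every rc-graph D ∈ RC(σ[r,m]) has row index i ≤ r, and the map sending D ∈ RC(σ[r,m]) to the tuple (k₁,...,k_r), where k_s is the number of cells of D in row s, is a bijection from RC(σ[r,m]) onto the set {(k₁,...,k_r) ∈ ℕ^r : k₁ + ... + k_r = m}. In particular, an rc-graph of σ[r,m] is uniquely determined by specifying the number of its crossings in each of the rows 1,...,r. -/
open MvPolynomial

/-- The length ℓ(w) of a (finitely supported) permutation of the positive integers:
the number of inversions. -/
noncomputable def plength (w : Equiv.Perm ℕ+) : ℕ :=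
  Set.ncard {p : ℕ+ × ℕ+ | p.1 < p.2 ∧ w p.2 < w p.1}

/-- The simple reflection sᵢ = t_{i,i+1}. -/
def sP (i : ℕ+) : Equiv.Perm ℕ+ := Equiv.swap i (i + 1)

/-- A reduced word for w: a list of positive letters whose simple reflections multiply
(in order) to w, of length ℓ(w). -/
def IsReducedWordP (w : Equiv.Perm ℕ+) (L : List ℕ+) : Prop :=
  (L.map sP).prod = w ∧ L.length = plength w

/-- The reading order on cells: increasing row index and, within a row, decreasing
column index. -/
def cellOrd (p q : ℕ+ × ℕ+) : Prop := p.1 < q.1 ∨ (p.1 = q.1 ∧ q.2 ≤ p.2)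

instance : DecidableRel cellOrd := fun p q => by unfold cellOrd; infer_instance

instance : IsTrans (ℕ+ × ℕ+) cellOrd := ⟨by
  rintro a b c (h | ⟨h1, h2⟩) (h' | ⟨h1', h2'⟩)
  · exact Or.inl (h.trans h')
  · exact Or.inl (lt_of_lt_of_le h (le_of_eq h1'))
  · exact Or.inl (lt_of_le_of_lt (le_of_eq h1) h')
  · exact Or.inr ⟨h1.trans h1', h2'.trans h2⟩⟩

instance : IsAntisymm (ℕ+ × ℕ+) cellOrd := ⟨by
  rintro a b (h | ⟨h1, h2⟩) (h' | ⟨h1', h2'⟩)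
  · exact absurd h' (not_lt.mpr h.le)
  · exact absurd h (by rw [h1']; exact lt_irrefl _)
  · exact absurd h' (by rw [h1]; exact lt_irrefl _)
  · exact Prod.ext h1 (le_antisymm h2' h2)⟩

instance : IsTotal (ℕ+ × ℕ+) cellOrd := ⟨fun a b => by
  rcases lt_trichotomy a.1 b.1 with h | h | h
  · exact Or.inl (Or.inl h)
  · rcases le_total b.2 a.2 with h2 | h2
    · exact Or.inl (Or.inr ⟨h, h2⟩)
    · exact Or.inr (Or.inr ⟨h.symm, h2⟩)
  · exact Or.inr (Or.inl h)⟩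

/-- The reading word of a finite set of cells: read the cells in order of increasing
row index and, within each row, decreasing column index; the cell (i,j) gives the
letter i + j − 1. -/
def rcWord (D : Finset (ℕ+ × ℕ+)) : List ℕ+ :=
  (D.sort cellOrd).map fun p => p.1 + p.2 - 1

/-- D is an rc-graph for w if its reading word is a reduced word for w. -/
def IsRCGraph (w : Equiv.Perm ℕ+) (D : Finset (ℕ+ × ℕ+)) : Prop :=
  IsReducedWordP w (rcWord D)

/-- The set RC(w) of rc-graphs for w. -/
def RCset (w : Equiv.Perm ℕ+) : Set (Finset (ℕ+ × ℕ+)) := {D | IsRCGraph w D}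

/-- The monomial x^D = ∏_{(i,j) ∈ D} xᵢ. -/
noncomputable def xD (D : Finset (ℕ+ × ℕ+)) : MvPolynomial ℕ+ ℤ :=
  ∏ p ∈ D, X p.1

/-- The number of cells of D in row s. -/
def rowCount (D : Finset (ℕ+ × ℕ+)) (s : ℕ+) : ℕ :=
  (D.filter fun p => p.1 = s).card


/-!
σ[r,n] = s_{r+n-1} ⋯ s_{r+1} s_r has length n and its only descent is at r, so stripping
last letters shows that this is its only reduced word: D is an rc-graph for σ[r,n] exactly
when its reading word is r+n-1, …, r+1, r. The last cell read carries the letter r, which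
bounds every row by r. The first cell read carries the letter r+n-1 and lies in the first
occupied row, so it is determined by the row counts; removing it leaves an rc-graph for
σ[r,n-1] with the same r, and induction on n gives injectivity. Conversely, adding the cell
on the diagonal r+n-1 in the first nonzero row of k gives surjectivity.
-/

def inversionSet (w : Equiv.Perm ℕ+) : Set (ℕ+ × ℕ+) := {p | p.1 < p.2 ∧ w p.2 < w p.1}

lemma plength_eq_ncard_inversionSet (w : Equiv.Perm ℕ+) : plength w = (inversionSet w).ncard :=
  rfl

lemma lt_and_ne_iff_swap (a x y : ℕ+) :
    (x < y ∧ (x, y) ≠ (a, a + 1)) ↔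
      (Equiv.swap a (a + 1) x < Equiv.swap a (a + 1) y ∧
        (Equiv.swap a (a + 1) x, Equiv.swap a (a + 1) y) ≠ (a, a + 1)) := by
  simp only [Equiv.swap_apply_def, Ne, Prod.mk.injEq, ← PNat.coe_lt_coe, ← PNat.coe_inj,
    PNat.add_coe, PNat.one_coe]
  split_ifs <;> push_cast at * <;> omega

lemma inversionSet_mul_sP_sdiff (w : Equiv.Perm ℕ+) (a : ℕ+) :
    inversionSet (w * sP a) \ {(a, a + 1)} =
      Equiv.prodCongr (sP a) (sP a) ⁻¹' (inversionSet w \ {(a, a + 1)}) := by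
  ext ⟨x, y⟩
  have := lt_and_ne_iff_swap a x y
  simp only [inversionSet, sP, Set.mem_diff, Set.mem_setOf_eq, Set.mem_singleton_iff,
    Set.mem_preimage, Equiv.prodCongr_apply, Prod.map, Equiv.Perm.mul_apply] at this ⊢
  tauto

lemma mem_inversionSet_mul_sP_iff (w : Equiv.Perm ℕ+) (a : ℕ+) :
    (a, a + 1) ∈ inversionSet (w * sP a) ↔ w a < w (a + 1) := by
  simp [inversionSet, sP, Equiv.Perm.mul_apply, ← PNat.coe_lt_coe]

lemma finite_inversionSet_mul_sP {w : Equiv.Perm ℕ+} (hw : (inversionSet w).Finite) (a : ℕ+) :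
    (inversionSet (w * sP a)).Finite := by
  have hsub : inversionSet (w * sP a) ⊆ insert (a, a + 1)
      (Equiv.prodCongr (sP a) (sP a) ⁻¹' (inversionSet w \ {(a, a + 1)})) := fun p hp => by
    by_cases hpa : p = (a, a + 1)
    · exact .inl hpa
    · exact .inr (inversionSet_mul_sP_sdiff w a ▸ ⟨hp, hpa⟩)
  exact ((hw.diff.preimage (Equiv.injective _).injOn).insert _).subset hsub

lemma plength_mul_sP_of_lt {w : Equiv.Perm ℕ+} (hw : (inversionSet w).Finite) {a : ℕ+}
    (h : w a < w (a + 1)) : plength (w * sP a) = plength w + 1 := by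
  have hc : (a, a + 1) ∉ inversionSet w := fun hc => hc.2.asymm h
  rw [plength_eq_ncard_inversionSet, plength_eq_ncard_inversionSet,
    ← Set.ncard_sdiff_singleton_add_one ((mem_inversionSet_mul_sP_iff w a).2 h)
      (finite_inversionSet_mul_sP hw a),
    inversionSet_mul_sP_sdiff, Set.ncard_preimage_of_injective_subset_range (Equiv.injective _)
      (by simp), Set.diff_singleton_eq_self hc]

lemma mul_sP_mul_sP (w : Equiv.Perm ℕ+) (a : ℕ+) : w * sP a * sP a = w := by
  rw [mul_assoc, sP, Equiv.swap_mul_self, mul_one]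

lemma plength_mul_sP_of_gt {w : Equiv.Perm ℕ+} (hw : (inversionSet w).Finite) {a : ℕ+}
    (h : w (a + 1) < w a) : plength (w * sP a) + 1 = plength w := by
  have h' : (w * sP a) a < (w * sP a) (a + 1) := by
    simpa [sP, Equiv.Perm.mul_apply] using h
  rw [← plength_mul_sP_of_lt (finite_inversionSet_mul_sP hw a) h', mul_sP_mul_sP]

lemma inversionSet_one : inversionSet 1 = ∅ :=
  Set.eq_empty_iff_forall_notMem.2 fun _ hp => hp.1.asymm hp.2

lemma finite_inversionSet_prod (L : List ℕ+) : (inversionSet (L.map sP).prod).Finite := by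
  induction L using List.reverseRecOn with
  | nil => simp [inversionSet_one]
  | append_singleton L a ih => simpa using finite_inversionSet_mul_sP ih a

lemma plength_prod_le (L : List ℕ+) : plength (L.map sP).prod ≤ L.length := by
  induction L using List.reverseRecOn with
  | nil => simp [plength_eq_ncard_inversionSet, inversionSet_one]
  | append_singleton L a ih =>
    have hw := finite_inversionSet_prod L
    simp only [List.map_append, List.map_singleton, List.prod_append, List.prod_singleton,
      List.length_append, List.length_singleton]
    rcases lt_or_gt_of_ne ((L.map sP).prod.injective.ne (a.lt_add_right 1).ne) with h | h
    · rw [plength_mul_sP_of_lt hw h]; omega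
    · have := plength_mul_sP_of_gt hw h; omega

lemma IsReducedWordP.descent_of_concat {w : Equiv.Perm ℕ+} {L : List ℕ+} {a : ℕ+}
    (h : IsReducedWordP w (L ++ [a])) : w (a + 1) < w a ∧ IsReducedWordP (w * sP a) L := by
  obtain ⟨hprod, hlen⟩ := h
  have hL : (L.map sP).prod = w * sP a := by
    rw [← hprod, List.map_append, List.prod_append, List.map_singleton, List.prod_singleton,
      mul_sP_mul_sP]
  have hw : (inversionSet w).Finite := hprod ▸ finite_inversionSet_prod _
  have hle := hL ▸ plength_prod_le L
  rw [List.length_append, List.length_singleton] at hlen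
  rcases lt_or_gt_of_ne (w.injective.ne (a.lt_add_right 1).ne) with h | h
  · have := plength_mul_sP_of_lt hw h; omega
  · have := plength_mul_sP_of_gt hw h
    exact ⟨h, hL, by omega⟩

def sigmaWord (r : ℕ+) : ℕ → List ℕ+
  | 0 => []
  | n + 1 => Nat.toPNat (r + n) (Nat.add_pos_left r.pos n) :: sigmaWord r n

lemma sigmaWord_succ_eq_concat (r : ℕ+) (n : ℕ) :
    sigmaWord r (n + 1) = sigmaWord (r + 1) n ++ [r] := by
  induction n with
  | zero => rfl
  | succ n ih =>
    rw [sigmaWord, ih, sigmaWord, List.cons_append]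
    congr 1
    rw [← PNat.coe_inj]
    simp only [Nat.toPNat, PNat.mk_coe, PNat.add_coe, PNat.one_coe]
    omega

lemma length_sigmaWord (r : ℕ+) (n : ℕ) : (sigmaWord r n).length = n := by
  induction n with
  | zero => rfl
  | succ n ih => rw [sigmaWord, List.length_cons, ih]

lemma coe_lt_of_mem_sigmaWord {r a : ℕ+} {n : ℕ} (ha : a ∈ sigmaWord r n) :
    (a : ℕ) < r + n := by
  induction n with
  | zero => simp [sigmaWord] at ha
  | succ n ih =>
    rcases List.mem_cons.1 ha with rfl | ha
    · show (r : ℕ) + n < r + (n + 1)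
      omega
    · have := ih ha
      omega

lemma getLast_sigmaWord (r : ℕ+) (n : ℕ) (h : sigmaWord r n ≠ []) :
    (sigmaWord r n).getLast h = r := by
  cases n with
  | zero => exact absurd rfl h
  | succ n => simp only [sigmaWord_succ_eq_concat, List.getLast_append_singleton]

def sigmaPerm (r : ℕ+) (n : ℕ) : Equiv.Perm ℕ+ := ((sigmaWord r n).map sP).prod

lemma sigmaPerm_succ (r : ℕ+) (n : ℕ) : sigmaPerm r (n + 1) = sigmaPerm (r + 1) n * sP r := by
  simp [sigmaPerm, sigmaWord_succ_eq_concat]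

def sigmaVal (r n x : ℕ) : ℕ :=
  if x < r then x else if x = r then r + n else if x ≤ r + n then x - 1 else x

lemma coe_swap_apply (a x : ℕ+) :
    (Equiv.swap a (a + 1) x : ℕ) =
      if (x : ℕ) = a then a + 1 else if (x : ℕ) = a + 1 then a else x := by
  simp only [Equiv.swap_apply_def, ← PNat.coe_inj, PNat.add_coe, PNat.one_coe]

lemma coe_sigmaPerm_apply (r : ℕ+) (n : ℕ) (x : ℕ+) :
    (sigmaPerm r n x : ℕ) = sigmaVal r n x := by
  induction n generalizing r x with
  | zero =>
    simp only [sigmaPerm, sigmaWord, List.map_nil, List.prod_nil, Equiv.Perm.one_apply, sigmaVal]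
    split_ifs <;> omega
  | succ n ih =>
    rw [sigmaPerm_succ, Equiv.Perm.mul_apply, ih, sP, coe_swap_apply]
    simp only [sigmaVal]
    split_ifs <;> push_cast at * <;> omega

lemma eq_sigmaPerm {r m : ℕ+} {σ : Equiv.Perm ℕ+}
    (hσ1 : ∀ i, i < r → σ i = i)
    (hσ2 : σ r = r + m)
    (hσ3 : ∀ j, r < j → j ≤ r + m → σ j + 1 = j)
    (hσ4 : ∀ j, r + m < j → σ j = j) :
    σ = sigmaPerm r m := by
  refine Equiv.ext fun x => PNat.coe_inj.1 ?_
  rw [coe_sigmaPerm_apply, sigmaVal]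
  rcases lt_trichotomy x r with hx | rfl | hx
  · rw [hσ1 x hx, if_pos ((PNat.coe_lt_coe _ _).2 hx)]
  · simp [hσ2]
  rcases le_or_gt x (r + m) with hxm | hxm
  · have hx1 := congrArg PNat.val (hσ3 x hx hxm)
    rw [← PNat.coe_lt_coe] at hx
    rw [← PNat.coe_le_coe, PNat.add_coe] at hxm
    rw [PNat.add_coe, PNat.val_ofNat] at hx1
    split_ifs <;> omega
  · rw [hσ4 x hxm]
    rw [← PNat.coe_lt_coe] at hx
    rw [← PNat.coe_lt_coe, PNat.add_coe] at hxm
    split_ifs <;> omega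

lemma sigmaPerm_lt_sigmaPerm_succ (r : ℕ+) (n : ℕ) :
    sigmaPerm (r + 1) n r < sigmaPerm (r + 1) n (r + 1) := by
  rw [← PNat.coe_lt_coe, coe_sigmaPerm_apply, coe_sigmaPerm_apply, sigmaVal, sigmaVal]
  split_ifs <;> push_cast at * <;> omega

lemma plength_sigmaPerm (r : ℕ+) (n : ℕ) : plength (sigmaPerm r n) = n := by
  induction n generalizing r with
  | zero => simp [plength_eq_ncard_inversionSet, sigmaPerm, sigmaWord, inversionSet_one]
  | succ n ih =>
    rw [sigmaPerm_succ, plength_mul_sP_of_lt (w := sigmaPerm (r + 1) n)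
      (finite_inversionSet_prod _) (sigmaPerm_lt_sigmaPerm_succ r n), ih]

lemma eq_of_sigmaPerm_succ_lt {r a : ℕ+} {n : ℕ}
    (h : sigmaPerm r n (a + 1) < sigmaPerm r n a) : a = r := by
  rw [← PNat.coe_lt_coe, coe_sigmaPerm_apply, coe_sigmaPerm_apply, sigmaVal, sigmaVal] at h
  rw [← PNat.coe_inj]
  split_ifs at h <;> push_cast at * <;> omega

lemma isReducedWordP_sigmaPerm_iff {r : ℕ+} {n : ℕ} {L : List ℕ+} :
    IsReducedWordP (sigmaPerm r n) L ↔ L = sigmaWord r n := by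
  refine ⟨fun h => ?_, fun h => ⟨h ▸ rfl, by rw [h, length_sigmaWord, plength_sigmaPerm]⟩⟩
  induction n generalizing r L with
  | zero => exact List.eq_nil_of_length_eq_zero (h.2.trans (plength_sigmaPerm r 0))
  | succ n ih =>
    obtain ⟨L, a, rfl⟩ := (List.eq_nil_or_concat' L).resolve_left fun hL => by
      simpa [hL, plength_sigmaPerm] using h.2
    obtain ⟨hdesc, hL⟩ := h.descent_of_concat
    obtain rfl := eq_of_sigmaPerm_succ_lt hdesc
    rw [sigmaPerm_succ, mul_sP_mul_sP] at hL
    rw [ih hL, sigmaWord_succ_eq_concat]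

instance : Std.Refl cellOrd := ⟨fun _ => .inr ⟨rfl, le_rfl⟩⟩

lemma cellOrd.fst_le {p q : ℕ+ × ℕ+} (h : cellOrd p q) : p.1 ≤ q.1 :=
  h.elim le_of_lt fun h => h.1.le

lemma coe_cellLetter (p : ℕ+ × ℕ+) : ((p.1 + p.2 - 1 : ℕ+) : ℕ) = p.1 + p.2 - 1 := by
  have h : (1 : ℕ+) < p.1 + p.2 := (PNat.one_le p.1).trans_lt (PNat.lt_add_right p.1 p.2)
  rw [PNat.sub_coe, if_pos h, PNat.add_coe, PNat.one_coe]

lemma length_rcWord (D : Finset (ℕ+ × ℕ+)) : (rcWord D).length = D.card := by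
  rw [rcWord, List.length_map, Finset.length_sort]

lemma rcWord_insert {D : Finset (ℕ+ × ℕ+)} {p : ℕ+ × ℕ+} (hp : p ∉ D)
    (hmin : ∀ q ∈ D, cellOrd p q) : rcWord (insert p D) = (p.1 + p.2 - 1) :: rcWord D := by
  rw [rcWord, Finset.sort_insert cellOrd hmin hp, List.map_cons, rcWord]

lemma exists_eq_insert_of_rcWord_eq_cons {D : Finset (ℕ+ × ℕ+)} {a : ℕ+} {w : List ℕ+}
    (h : rcWord D = a :: w) :
    ∃ p D', p ∉ D' ∧ (∀ q ∈ D', cellOrd p q) ∧ insert p D' = D ∧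
      p.1 + p.2 - 1 = a ∧ rcWord D' = w := by
  obtain ⟨p, t, ht⟩ := List.exists_cons_of_ne_nil (l := D.sort cellOrd) fun h0 => by
    simp [rcWord, h0] at h
  have hpD : p ∈ D := (Finset.mem_sort cellOrd).1 (ht ▸ List.mem_cons_self)
  have hmin : ∀ q ∈ D.erase p, cellOrd p q := fun q hq => by
    have hq' := (Finset.mem_sort cellOrd).2 (Finset.mem_of_mem_erase hq)
    rw [ht, List.mem_cons] at hq'
    exact List.rel_of_pairwise_cons (ht ▸ D.pairwise_sort cellOrd)
      (hq'.resolve_left (Finset.ne_of_mem_erase hq))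
  have hins := Finset.insert_erase hpD
  rw [← hins, rcWord_insert (Finset.notMem_erase p D) hmin, List.cons.injEq] at h
  exact ⟨p, D.erase p, Finset.notMem_erase p D, hmin, hins, h⟩

lemma fst_le_of_rcWord_eq_sigmaWord {D : Finset (ℕ+ × ℕ+)} {r : ℕ+} {n : ℕ}
    (hD : rcWord D = sigmaWord r n) {p : ℕ+ × ℕ+} (hp : p ∈ D) : p.1 ≤ r := by
  have hpS : p ∈ D.sort cellOrd := (Finset.mem_sort cellOrd).2 hp
  have hne : rcWord D ≠ [] := by simpa [rcWord] using List.ne_nil_of_mem hpS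
  set q := (D.sort cellOrd).getLast (List.ne_nil_of_mem hpS)
  have hq : q.1 + q.2 - 1 = r := by
    rw [← getLast_sigmaWord r n (hD ▸ hne), ← List.getLast_congr hne _ hD]
    exact (List.getLast_map hne).symm
  have hpq : (p.1 : ℕ) ≤ q.1 := ((D.pairwise_sort cellOrd).rel_getLast hpS).fst_le
  have hq' := congrArg PNat.val hq
  rw [coe_cellLetter] at hq'
  rw [← PNat.coe_le_coe]
  have := q.2.pos
  omega

lemma rcWord_eq_sigmaWord_succ_iff {D : Finset (ℕ+ × ℕ+)} {r : ℕ+} {n : ℕ} :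
    rcWord D = sigmaWord r (n + 1) ↔
      ∃ p D', p ∉ D' ∧ (∀ q ∈ D', cellOrd p q) ∧ insert p D' = D ∧
        (p.1 : ℕ) + p.2 = r + n + 1 ∧ rcWord D' = sigmaWord r n := by
  constructor
  · intro h
    obtain ⟨p, D', hp, hmin, rfl, hletter, hD'⟩ := exists_eq_insert_of_rcWord_eq_cons h
    refine ⟨p, D', hp, hmin, rfl, ?_, hD'⟩
    have : (p.1 : ℕ) + p.2 - 1 = r + n := by rw [← coe_cellLetter, hletter]; rfl
    have := p.2.pos
    omega
  · rintro ⟨p, D', hp, hmin, rfl, hsum, hD'⟩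
    rw [rcWord_insert hp hmin, hD', sigmaWord]
    congr 1
    rw [← PNat.coe_inj, coe_cellLetter]
    show _ = (r : ℕ) + n
    omega

lemma add_le_of_rcWord_eq_sigmaWord {D : Finset (ℕ+ × ℕ+)} {r : ℕ+} {n : ℕ}
    (hD : rcWord D = sigmaWord r n) {q : ℕ+ × ℕ+} (hq : q ∈ D) : (q.1 : ℕ) + q.2 ≤ r + n := by
  have hmem : q.1 + q.2 - 1 ∈ sigmaWord r n :=
    hD ▸ List.mem_map_of_mem ((Finset.mem_sort cellOrd).2 hq)
  have := coe_lt_of_mem_sigmaWord hmem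
  rw [coe_cellLetter] at this
  have := q.1.pos
  omega

lemma rowCount_insert {D : Finset (ℕ+ × ℕ+)} {p : ℕ+ × ℕ+} (hp : p ∉ D) :
    rowCount (insert p D) = rowCount D + Pi.single p.1 1 := by
  funext s
  rw [Pi.add_apply, Pi.single_apply, rowCount, rowCount, Finset.filter_insert]
  by_cases hs : p.1 = s
  · rw [if_pos hs, if_pos hs.symm,
      Finset.card_insert_of_notMem fun h => hp (Finset.mem_filter.1 h).1]
  · rw [if_neg hs, if_neg (Ne.symm hs), add_zero]

lemma rowCount_ne_zero_iff {D : Finset (ℕ+ × ℕ+)} {s : ℕ+} :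
    rowCount D s ≠ 0 ↔ ∃ q ∈ D, q.1 = s := by
  simp [rowCount, Finset.filter_eq_empty_iff]

lemma finsum_rowCount (D : Finset (ℕ+ × ℕ+)) : ∑ᶠ s, rowCount D s = D.card := by
  have hsupp : Function.support (rowCount D) ⊆ D.image Prod.fst := fun s hs => by
    obtain ⟨q, hq, rfl⟩ := rowCount_ne_zero_iff.1 hs
    exact Finset.mem_coe.2 (Finset.mem_image_of_mem _ hq)
  rw [finsum_eq_finsetSum_of_support_subset _ hsupp]
  exact (Finset.card_eq_sum_card_image Prod.fst D).symm

lemma fst_le_of_rowCount_insert_ne_zero {D : Finset (ℕ+ × ℕ+)} {p : ℕ+ × ℕ+} {s : ℕ+}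
    (hmin : ∀ q ∈ D, cellOrd p q) (hs : rowCount (insert p D) s ≠ 0) : p.1 ≤ s := by
  obtain ⟨q, hq, rfl⟩ := rowCount_ne_zero_iff.1 hs
  rcases Finset.mem_insert.1 hq with rfl | hq
  · exact le_rfl
  · exact (hmin q hq).fst_le

def weakCompositions (r : ℕ+) (n : ℕ) : Set (ℕ+ → ℕ) :=
  {k | (∀ s, r < s → k s = 0) ∧ ∑ᶠ s, k s = n}

lemma finsum_eq_sum_Iic {r : ℕ+} {k : ℕ+ → ℕ} (hk : ∀ s, r < s → k s = 0) :
    ∑ᶠ s, k s = ∑ s ∈ Finset.Iic r, k s :=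
  finsum_eq_finsetSum_of_support_subset k fun s hs =>
    Finset.mem_coe.2 (Finset.mem_Iic.2 (not_lt.1 fun h => hs (hk s h)))

lemma rowCount_mem_weakCompositions {D : Finset (ℕ+ × ℕ+)} {r : ℕ+} {n : ℕ}
    (hD : rcWord D = sigmaWord r n) : rowCount D ∈ weakCompositions r n := by
  refine ⟨fun s hs => ?_, ?_⟩
  · by_contra h
    obtain ⟨q, hq, rfl⟩ := rowCount_ne_zero_iff.1 h
    exact hs.not_ge (fst_le_of_rcWord_eq_sigmaWord hD hq)
  · rw [finsum_rowCount, ← length_rcWord, hD, length_sigmaWord]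

lemma injOn_rowCount (r : ℕ+) (n : ℕ) : Set.InjOn rowCount {D | rcWord D = sigmaWord r n} := by
  induction n with
  | zero =>
    intro D (hD : rcWord D = _) E (hE : rcWord E = _) _
    rw [Finset.card_eq_zero.1 (by rw [← length_rcWord, hD, length_sigmaWord] : D.card = 0),
      Finset.card_eq_zero.1 (by rw [← length_rcWord, hE, length_sigmaWord] : E.card = 0)]
  | succ n ih =>
    intro D hD E hE hDE
    obtain ⟨p, D', hpD', hp, rfl, hpsum, hD'⟩ := rcWord_eq_sigmaWord_succ_iff.1 hD
    obtain ⟨q, E', hqE', hq, rfl, hqsum, hE'⟩ := rcWord_eq_sigmaWord_succ_iff.1 hE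
    have hrow : p.1 = q.1 := by
      have hpp : rowCount (insert p D') p.1 ≠ 0 :=
        rowCount_ne_zero_iff.2 ⟨p, Finset.mem_insert_self p D', rfl⟩
      have hqq : rowCount (insert q E') q.1 ≠ 0 :=
        rowCount_ne_zero_iff.2 ⟨q, Finset.mem_insert_self q E', rfl⟩
      rw [hDE] at hpp
      rw [← hDE] at hqq
      exact le_antisymm (fst_le_of_rowCount_insert_ne_zero hp hqq)
        (fst_le_of_rowCount_insert_ne_zero hq hpp)
    obtain rfl : p = q := Prod.ext hrow (PNat.coe_inj.1 (by rw [hrow] at hpsum; omega))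
    rw [rowCount_insert hpD', rowCount_insert hqE'] at hDE
    rw [ih hD' hE' (add_right_cancel hDE)]

lemma eq_zero_of_mem_weakCompositions_zero {r : ℕ+} {k : ℕ+ → ℕ}
    (hk : k ∈ weakCompositions r 0) : k = 0 := by
  obtain ⟨hkr, hsum⟩ := hk
  rw [finsum_eq_sum_Iic hkr, Finset.sum_eq_zero_iff] at hsum
  funext s
  by_cases hs : r < s
  · exact hkr s hs
  · exact hsum s (Finset.mem_Iic.2 (not_lt.1 hs))

lemma exists_eq_add_single_of_mem_weakCompositions_succ {r : ℕ+} {n : ℕ} {k : ℕ+ → ℕ}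
    (hk : k ∈ weakCompositions r (n + 1)) :
    ∃ i, ∃ k' : ℕ+ → ℕ, i ≤ r ∧ k = k' + Pi.single i 1 ∧ k' ∈ weakCompositions r n ∧
      ∀ s, k' s ≠ 0 → i ≤ s := by
  obtain ⟨hkr, hsum⟩ := hk
  have hne : (Function.support k).Nonempty := by
    by_contra h
    rw [Set.not_nonempty_iff_eq_empty, Function.support_eq_empty_iff] at h
    simp [h] at hsum
  obtain ⟨i, hi, hmin⟩ := wellFounded_lt.has_min _ hne
  have hir : i ≤ r := not_lt.1 fun h => hi (hkr i h)
  obtain ⟨k', rfl⟩ : ∃ k' : ℕ+ → ℕ, k = k' + Pi.single i 1 := by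
    refine ⟨Function.update k i (k i - 1), funext fun s => ?_⟩
    rcases eq_or_ne s i with rfl | hs
    · have : k s ≠ 0 := hi
      simp only [Pi.add_apply, Function.update_self, Pi.single_eq_same]
      omega
    · simp [hs]
  have hk'r : ∀ s, r < s → k' s = 0 := fun s hs => Nat.eq_zero_of_add_eq_zero_right (hkr s hs)
  refine ⟨i, k', hir, rfl, ⟨hk'r, ?_⟩, fun s hs => not_lt.1 fun h => hmin s ?_ h⟩
  · rw [finsum_eq_sum_Iic hkr] at hsum
    simp only [Pi.add_apply] at hsum
    rw [Finset.sum_add_distrib, Finset.sum_pi_single', if_pos (Finset.mem_Iic.2 hir),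
      add_left_inj] at hsum
    rw [finsum_eq_sum_Iic hk'r, hsum]
  · simp only [Function.mem_support, Pi.add_apply]
    omega

lemma surjOn_rowCount (r : ℕ+) (n : ℕ) :
    Set.SurjOn rowCount {D | rcWord D = sigmaWord r n} (weakCompositions r n) := by
  induction n with
  | zero =>
    intro k hk
    refine ⟨∅, by simp [rcWord, sigmaWord], ?_⟩
    rw [eq_zero_of_mem_weakCompositions_zero hk]
    rfl
  | succ n ih =>
    intro k hk
    obtain ⟨i, k', hir, rfl, hk', hmin⟩ := exists_eq_add_single_of_mem_weakCompositions_succ hk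
    obtain ⟨D', hD' : rcWord D' = _, rfl⟩ := ih hk'
    have hi : (i : ℕ) ≤ r := hir
    let p : ℕ+ × ℕ+ := (i, Nat.toPNat (r + n + 1 - i) (by omega))
    have hpsum : (p.1 : ℕ) + p.2 = r + n + 1 := by
      show (i : ℕ) + (r + n + 1 - i) = _
      omega
    have hpD' : p ∉ D' := fun hp => by
      have := add_le_of_rcWord_eq_sigmaWord hD' hp
      omega
    have hpmin : ∀ q ∈ D', cellOrd p q := fun q hq => by
      have hletter := add_le_of_rcWord_eq_sigmaWord hD' hq
      rcases (hmin q.1 (rowCount_ne_zero_iff.2 ⟨q, hq, rfl⟩)).lt_or_eq with h | h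
      · exact .inl h
      · refine .inr ⟨h, ?_⟩
        rw [← PNat.coe_le_coe]
        rw [← h] at hletter
        show (q.2 : ℕ) ≤ r + n + 1 - i
        omega
    exact ⟨insert p D', rcWord_eq_sigmaWord_succ_iff.2 ⟨p, D', hpD', hpmin, rfl, hpsum, hD'⟩,
      rowCount_insert hpD'⟩

lemma rcSet_sigmaPerm (r : ℕ+) (n : ℕ) :
    RCset (sigmaPerm r n) = {D | rcWord D = sigmaWord r n} :=
  Set.ext fun _ => isReducedWordP_sigmaPerm_iff

lemma bijOn_rowCount (r : ℕ+) (n : ℕ) :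
    Set.BijOn rowCount {D | rcWord D = sigmaWord r n} (weakCompositions r n) :=
  ⟨fun _ hD => rowCount_mem_weakCompositions hD, injOn_rowCount r n, surjOn_rowCount r n⟩

/-- Every cell of an rc-graph of σ[r,m] lies in a row ≤ r, and an rc-graph of σ[r,m]
is uniquely determined by its row counts (k₁,…,k_r), which can be any tuple of
nonnegative integers summing to m.  Here σ = σ[r,m] is characterized by its values:
σ(i) = i for i < r, σ(r) = r + m, σ(j) = j − 1 for r < j ≤ r + m (stated as
σ(j) + 1 = j), and σ(j) = j for j > r + m. -/
theorem rcgraphs_of_sigma (r m : ℕ+) (σ : Equiv.Perm ℕ+)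
    (hσ1 : ∀ i, i < r → σ i = i)
    (hσ2 : σ r = r + m)
    (hσ3 : ∀ j, r < j → j ≤ r + m → σ j + 1 = j)
    (hσ4 : ∀ j, r + m < j → σ j = j) :
    (∀ D ∈ RCset σ, ∀ p ∈ D, p.1 ≤ r) ∧
    Set.BijOn (fun D : Finset (ℕ+ × ℕ+) => fun s => rowCount D s)
      (RCset σ)
      {k : ℕ+ → ℕ | (∀ s, r < s → k s = 0) ∧ ∑ᶠ s, k s = (m : ℕ)} := by
  rw [eq_sigmaPerm hσ1 hσ2 hσ3 hσ4, rcSet_sigmaPerm]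
  exact ⟨fun _ hD _ hp => fst_le_of_rcWord_eq_sigmaWord hD hp, bijOn_rowCount r m⟩
end

section
/- Let w be a finitely supported permutation of the positive integers and let D ∈ RC(w). Suppose (i,j) ∈ D, (i,j+1) ∉ D, and for some integer m ≥ 0 with i − m − 1 ≥ 1: both (k,j) ∈ D and (k,j+1) ∈ D for every k with i − m ≤ k ≤ i − 1, and (i−m−1, j) ∉ D and (i−m−1, j+1) ∉ D. Then the set D' = (D ∖ {(i,j)}) ∪ {(i−m−1, j+1)} obtained by this ladder move is again an rc-graph for the same permutation w, i.e. D' ∈ RC(w). -/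
open MvPolynomial

/-!
Write `P(S)` for the product of the simple reflections read off a finite set of cells `S`.
Since the reading order is total, `P` is multiplicative along any splitting of `S` into an
initial and a final segment. The ladder move deletes the letter `i + j - 1` and inserts the
letter `i - m - 1 + j` earlier in the word, just before the block `M` of cells strictly between
the two positions, so it suffices that `s_{i-m-1+j} P(M) = P(M) s_{i+j-1}`. The cells of `M` in
rows `i - m - 1` and `i` carry letters at distance at least two from the travelling letter, and
each full row `k` in between reads `(letters ≥ k+j+1) s_{k+j} s_{k+j-1} (letters ≤ k+j-2)`,
through which a braid relation carries `s_{k+j-1}` to `s_{k+j}`. The number of cells does not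
change, so the new word is again reduced.
-/

open Finset

abbrev Cell := ℕ+ × ℕ+

def rcPerm (D : Finset Cell) : Equiv.Perm ℕ+ := ((rcWord D).map sP).prod

lemma isRCGraph_iff {w : Equiv.Perm ℕ+} {D : Finset Cell} :
    IsRCGraph w D ↔ rcPerm D = w ∧ D.card = plength w := by
  rw [IsRCGraph, IsReducedWordP, rcPerm, rcWord, List.length_map, length_sort]

lemma cellOrd_iff {p q : Cell} :
    cellOrd p q ↔ (p.1 : ℕ) < q.1 ∨ (p.1 : ℕ) = q.1 ∧ (q.2 : ℕ) ≤ p.2 := by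
  simp only [cellOrd, PNat.coe_lt_coe, PNat.coe_inj, PNat.coe_le_coe]

lemma cell_eq_iff {p q : Cell} : p = q ↔ (p.1 : ℕ) = q.1 ∧ (p.2 : ℕ) = q.2 := by
  simp only [Prod.ext_iff, PNat.coe_inj]

lemma cellOrd_refl (p : Cell) : cellOrd p p := Or.inr ⟨rfl, le_rfl⟩

lemma cellOrd_of_not_cellOrd {a b c : Cell} (ha : cellOrd a c) (hb : ¬ cellOrd b c) :
    cellOrd a b :=
  _root_.trans ha ((total_of cellOrd b c).resolve_left hb)

lemma rcWord_union {A B : Finset Cell} (hAB : Disjoint A B)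
    (h : ∀ a ∈ A, ∀ b ∈ B, cellOrd a b) : rcWord (A ∪ B) = rcWord A ++ rcWord B := by
  rw [rcWord, rcWord, rcWord, ← List.map_append]
  congr 1
  refine List.Perm.eq_of_pairwise' (pairwise_sort _ _) (List.pairwise_append.2
    ⟨pairwise_sort _ _, pairwise_sort _ _, fun a ha b hb =>
      h a ((mem_sort _).1 ha) b ((mem_sort _).1 hb)⟩) ?_
  rw [← Multiset.coe_eq_coe, ← Multiset.coe_add, sort_eq, sort_eq, sort_eq,
    ← disjUnion_eq_union _ _ hAB, disjUnion_val]

lemma rcPerm_union {A B : Finset Cell} (hAB : Disjoint A B)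
    (h : ∀ a ∈ A, ∀ b ∈ B, cellOrd a b) : rcPerm (A ∪ B) = rcPerm A * rcPerm B := by
  rw [rcPerm, rcWord_union hAB h, List.map_append, List.prod_append, rcPerm, rcPerm]

lemma rcPerm_singleton (c : Cell) : rcPerm {c} = sP (c.1 + c.2 - 1) := by
  simp [rcPerm, rcWord, sort_singleton]

lemma rcPerm_filter (S : Finset Cell) (p : Cell → Prop) [DecidablePred p]
    (h : ∀ a ∈ S, ∀ b ∈ S, p a → ¬ p b → cellOrd a b) :
    rcPerm S = rcPerm (S.filter p) * rcPerm (S.filter (¬ p ·)) := by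
  rw [← rcPerm_union (disjoint_filter_filter_not S S p), filter_union_filter_not_eq]
  simp only [mem_filter]
  exact fun a ha b hb => h a ha.1 b hb.1 ha.2 hb.2

lemma rcPerm_eq_mul_erase {S : Finset Cell} {c : Cell} (hc : c ∈ S)
    (hmin : ∀ q ∈ S, cellOrd c q) : rcPerm S = sP (c.1 + c.2 - 1) * rcPerm (S.erase c) := by
  conv_lhs => rw [← insert_erase hc, insert_eq]
  rw [rcPerm_union (disjoint_singleton_left.2 (notMem_erase c S)), rcPerm_singleton]
  simp only [mem_singleton, forall_eq]
  exact fun q hq => hmin q (mem_of_mem_erase hq)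

lemma rcPerm_insert {S : Finset Cell} {c : Cell} (hc : c ∉ S) :
    rcPerm (insert c S) = rcPerm (S.filter (cellOrd · c)) * sP (c.1 + c.2 - 1) *
      rcPerm (S.filter (¬ cellOrd · c)) := by
  rw [rcPerm_filter _ (cellOrd · c) fun a _ b _ => cellOrd_of_not_cellOrd, filter_insert,
    filter_insert, if_pos (cellOrd_refl c), if_neg (not_not.2 (cellOrd_refl c)), insert_eq,
    union_comm, rcPerm_union, rcPerm_singleton]
  · exact disjoint_singleton_right.2 fun h => hc (mem_of_mem_filter c h)
  · simp only [mem_filter, mem_singleton, forall_eq]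
    exact fun a ha => ha.2

def readingIoc (S : Finset Cell) (c d : Cell) : Finset Cell :=
  S.filter fun q => ¬ cellOrd q c ∧ cellOrd q d

lemma rcPerm_filter_le {c d : Cell} (hcd : cellOrd c d) (S : Finset Cell) :
    rcPerm (S.filter (cellOrd · d)) = rcPerm (S.filter (cellOrd · c)) *
      rcPerm (readingIoc S c d) := by
  rw [rcPerm_filter _ (cellOrd · c) fun a _ b _ => cellOrd_of_not_cellOrd,
    filter_filter, filter_filter, readingIoc]
  congr 2
  · exact filter_congr fun q _ => ⟨And.right, fun h => ⟨_root_.trans h hcd, h⟩⟩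
  · exact filter_congr fun q _ => And.comm

lemma rcPerm_filter_not_le {c d : Cell} (hcd : cellOrd c d) (S : Finset Cell) :
    rcPerm (S.filter (¬ cellOrd · c)) = rcPerm (readingIoc S c d) *
      rcPerm (S.filter (¬ cellOrd · d)) := by
  rw [rcPerm_filter _ (cellOrd · d) fun a _ b _ => cellOrd_of_not_cellOrd,
    filter_filter, filter_filter, readingIoc]
  congr 2
  exact filter_congr fun q _ => ⟨And.right, fun h => ⟨fun h' => h (_root_.trans h' hcd), h⟩⟩

lemma sP_commute {a b : ℕ+} (h : (a : ℕ) + 2 ≤ b) : Commute (sP a) (sP b) := by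
  refine Equiv.Perm.Disjoint.commute fun x => ?_
  by_cases hx : x = a ∨ x = a + 1
  · right
    rcases hx with rfl | rfl <;>
      exact Equiv.swap_apply_of_ne_of_ne (ne_of_apply_ne PNat.val (by push_cast; omega))
        (ne_of_apply_ne PNat.val (by push_cast; omega))
  · left
    rw [not_or] at hx
    exact Equiv.swap_apply_of_ne_of_ne hx.1 hx.2

lemma sP_braid (a : ℕ+) : sP a * sP (a + 1) * sP a = sP (a + 1) * sP a * sP (a + 1) := by
  have ha1 : a ≠ a + 1 := ne_of_apply_ne PNat.val (by simp)
  have ha2 : a + 1 ≠ a + 1 + 1 := ne_of_apply_ne PNat.val (by simp)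
  have ha3 : a ≠ a + 1 + 1 := ne_of_apply_ne PNat.val (by simp; omega)
  have lhs : sP a * sP (a + 1) * sP a = Equiv.swap a (a + 1 + 1) := by
    rw [sP, sP, Equiv.swap_comm a, Equiv.swap_comm (a + 1) (a + 1 + 1)]
    exact Equiv.swap_mul_swap_mul_swap ha2.symm ha3.symm
  rw [lhs, sP, sP, Equiv.swap_mul_swap_mul_swap ha1 ha3, Equiv.swap_comm]

lemma letter_coe (a b : ℕ+) : ((a + b - 1 : ℕ+) : ℕ) = a + b - 1 := by
  have := a.pos
  have := b.pos
  rw [PNat.sub_coe, if_pos (by rw [← PNat.coe_lt_coe]; push_cast; omega)]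
  rfl

/-- The hypothesis says that the letter `q.1 + q.2 - 1` of each cell differs from `a` by at
least `2`. -/
lemma commute_sP_rcPerm {a : ℕ+} {S : Finset Cell}
    (h : ∀ q ∈ S, (a : ℕ) + 3 ≤ q.1 + q.2 ∨ (q.1 : ℕ) + q.2 + 1 ≤ a) :
    Commute (sP a) (rcPerm S) := by
  refine Commute.list_prod_right _ _ fun x hx => ?_
  obtain ⟨b, hb, rfl⟩ := List.mem_map.1 hx
  obtain ⟨q, hq, rfl⟩ := List.mem_map.1 hb
  have hlt := h q ((mem_sort _).1 hq)
  have := q.1.pos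
  rcases hlt with hlt | hlt
  · exact sP_commute (by rw [letter_coe]; omega)
  · exact (sP_commute (by rw [letter_coe]; omega)).symm

theorem sP_mul_rcPerm_ladder (j : ℕ+) (m : ℕ) (k c : ℕ+) (S : Finset Cell)
    (hrows : ∀ q ∈ S, (k : ℕ) ≤ q.1 ∧ (q.1 : ℕ) ≤ k + m)
    (hfirst : ∀ q ∈ S, (q.1 : ℕ) = k → (q.2 : ℕ) < j)
    (hladder : ∀ r : ℕ+, (k : ℕ) < r → (r : ℕ) ≤ k + m → (r, j) ∈ S ∧ (r, j + 1) ∈ S)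
    (hc : (c : ℕ) = k + j + m) :
    sP (k + j) * rcPerm S = rcPerm S * sP c := by
  induction m generalizing k S with
  | zero =>
    obtain rfl : c = k + j := PNat.eq (by simpa using hc)
    refine (commute_sP_rcPerm fun q hq => Or.inr ?_).eq
    have := hrows q hq
    have := hfirst q hq
    push_cast
    omega
  | succ m ih =>
    obtain ⟨hlow, hhigh⟩ := hladder (k + 1) (by push_cast; omega) (by push_cast; omega)
    set p : Cell → Prop := fun q => (q.1 : ℕ) ≤ k ∨ (q.1 : ℕ) = k + 1 ∧ (j : ℕ) + 2 ≤ q.2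
    set A := S.filter p
    set B := S.filter (¬ p ·)
    set T := (B.erase (k + 1, j + 1)).erase (k + 1, j)
    have hS : rcPerm S = rcPerm A * rcPerm B :=
      rcPerm_filter S p fun a _ b _ ha hb => by simp only [p] at ha hb; rw [cellOrd_iff]; omega
    have hA : Commute (sP (k + j)) (rcPerm A) := commute_sP_rcPerm fun q hq => by
      simp only [A, p, mem_filter] at hq
      have := hrows q hq.1
      have := hfirst q hq.1
      push_cast
      omega
    have hB : rcPerm B = sP (k + j + 1) * (sP (k + j) * rcPerm T) := by
      have e1 : k + 1 + (j + 1) - 1 = k + j + 1 := PNat.eq (by rw [letter_coe]; push_cast; omega)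
      have e0 : k + 1 + j - 1 = k + j := PNat.eq (by rw [letter_coe]; push_cast; omega)
      rw [rcPerm_eq_mul_erase (c := (k + 1, j + 1)) ?_ ?_,
        rcPerm_eq_mul_erase (c := (k + 1, j)) ?_ ?_, e1, e0]
      all_goals simp only [B, p, mem_erase, mem_filter, ne_eq, cell_eq_iff, PNat.add_coe,
        PNat.one_coe, cellOrd_iff, true_and]
      · exact ⟨by omega, hlow, by omega⟩
      · intro q hq
        omega
      · exact ⟨hhigh, by omega⟩
      · intro q hq
        omega
    have hT : sP (k + j + 1) * rcPerm T = rcPerm T * sP c := by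
      rw [add_right_comm k j 1]
      refine ih (k + 1) T (fun q hq => ?_) (fun q hq hq1 => ?_) (fun r hr1 hr2 => ?_)
        (by push_cast; omega)
      · simp only [T, B, p, mem_erase, mem_filter] at hq
        have := hrows q hq.2.2.1
        push_cast
        omega
      · simp only [T, B, p, mem_erase, mem_filter, ne_eq, cell_eq_iff, PNat.add_coe,
          PNat.one_coe] at hq hq1
        omega
      · push_cast at hr1 hr2
        obtain ⟨hr, hr'⟩ := hladder r (by omega) (by omega)
        simp only [T, B, p, mem_erase, mem_filter, ne_eq, cell_eq_iff, PNat.add_coe,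
          PNat.one_coe]
        exact ⟨⟨by omega, by omega, hr, by omega⟩, ⟨by omega, by omega, hr', by omega⟩⟩
    rw [hS, hB]
    calc sP (k + j) * (rcPerm A * (sP (k + j + 1) * (sP (k + j) * rcPerm T)))
        = rcPerm A * (sP (k + j) * sP (k + j + 1) * sP (k + j)) * rcPerm T := by
          rw [← mul_assoc, hA.eq]
          simp only [mul_assoc]
      _ = rcPerm A * (sP (k + j + 1) * sP (k + j)) * (sP (k + j + 1) * rcPerm T) := by
          rw [sP_braid]
          simp only [mul_assoc]
      _ = rcPerm A * (sP (k + j + 1) * (sP (k + j) * rcPerm T)) * sP c := by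
          rw [hT]
          simp only [mul_assoc]

lemma mk_mem_of_coe_eq {S : Finset Cell} {q : Cell} {a b : ℕ+} (hq : q ∈ S)
    (h1 : (q.1 : ℕ) = a) (h2 : (q.2 : ℕ) = b) : (a, b) ∈ S :=
  (cell_eq_iff (p := q) (q := (a, b))).2 ⟨h1, h2⟩ ▸ hq

lemma sP_mul_rcPerm_readingIoc {D : Finset Cell} {i j i' : ℕ+} {m : ℕ}
    (hi' : (i' : ℕ) + m + 1 = i) (h2 : (i, j + 1) ∉ D)
    (h3 : ∀ k : ℕ+, i' < k → k < i → (k, j) ∈ D ∧ (k, j + 1) ∈ D) (h4 : (i', j) ∉ D) :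
    sP (i' + j) * rcPerm (readingIoc (D.erase (i, j)) (i', j + 1) (i, j)) =
      rcPerm (readingIoc (D.erase (i, j)) (i', j + 1) (i, j)) * sP (i + j - 1) := by
  set M := readingIoc (D.erase (i, j)) (i', j + 1) (i, j)
  have hM : ∀ q ∈ M, q ∈ D ∧ ¬ ((q.1 : ℕ) = i ∧ (q.2 : ℕ) = j) ∧
      (i' : ℕ) ≤ q.1 ∧ ((q.1 : ℕ) = i' → (q.2 : ℕ) ≤ j) ∧ (q.1 : ℕ) ≤ i ∧
      ((q.1 : ℕ) = i → (j : ℕ) ≤ q.2) := by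
    intro q hq
    simp only [M, readingIoc, mem_filter, mem_erase, ne_eq, cell_eq_iff, cellOrd_iff,
      PNat.add_coe, PNat.one_coe] at hq
    exact ⟨hq.1.2, hq.1.1, by omega, by omega, by omega, by omega⟩
  let p : Cell → Prop := fun q => (q.1 : ℕ) < i
  have hsplit : rcPerm M = rcPerm (M.filter p) * rcPerm (M.filter (¬ p ·)) :=
    rcPerm_filter M p fun a _ b _ ha hb => by simp only [p] at ha hb; rw [cellOrd_iff]; omega
  have hlow : sP (i' + j) * rcPerm (M.filter p) = rcPerm (M.filter p) * sP (i + j - 1) := by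
    refine sP_mul_rcPerm_ladder j m i' _ _ (fun q hq => ?_) (fun q hq hq1 => ?_)
      (fun r hr1 hr2 => ?_) (by rw [letter_coe]; omega)
    · have := hM q (mem_of_mem_filter q hq)
      have := (mem_filter.1 hq).2
      omega
    · obtain ⟨hqD, -, -, hle, -⟩ := hM q (mem_of_mem_filter q hq)
      exact lt_of_le_of_ne (hle hq1) fun hq2 => h4 (mk_mem_of_coe_eq hqD hq1 hq2)
    · obtain ⟨hr, hr'⟩ :=
        h3 r (PNat.coe_lt_coe _ _ |>.1 hr1) (PNat.coe_lt_coe _ _ |>.1 (by omega))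
      simp only [M, readingIoc, p, mem_filter, mem_erase, ne_eq, cell_eq_iff, cellOrd_iff,
        PNat.add_coe, PNat.one_coe]
      exact ⟨⟨⟨⟨by omega, hr⟩, by omega⟩, by omega⟩, ⟨⟨⟨by omega, hr'⟩, by omega⟩, by omega⟩⟩
  have hhigh : Commute (sP (i + j - 1)) (rcPerm (M.filter (¬ p ·))) :=
    commute_sP_rcPerm fun q hq => by
      obtain ⟨hqD, hne, -, -, hle, hge⟩ := hM q (mem_of_mem_filter q hq)
      have hqi : (q.1 : ℕ) = i := by have := (mem_filter.1 hq).2; omega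
      have hq2 : (q.2 : ℕ) ≠ j + 1 := fun hq2 => h2 (mk_mem_of_coe_eq hqD hqi (by simpa))
      left
      rw [letter_coe]
      omega
  rw [hsplit, ← mul_assoc, hlow, mul_assoc, hhigh.eq, mul_assoc]

theorem rcPerm_ladder_move {D : Finset Cell} {i j i' : ℕ+} {m : ℕ}
    (hi' : (i' : ℕ) + m + 1 = i) (h1 : (i, j) ∈ D) (h2 : (i, j + 1) ∉ D)
    (h3 : ∀ k : ℕ+, i' < k → k < i → (k, j) ∈ D ∧ (k, j + 1) ∈ D)
    (h4 : (i', j) ∉ D) (h5 : (i', j + 1) ∉ D) :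
    rcPerm (insert (i', j + 1) (D.erase (i, j))) = rcPerm D := by
  have hcd : cellOrd (i', j + 1) (i, j) := by rw [cellOrd_iff]; push_cast; omega
  have hletter : i' + (j + 1) - 1 = i' + j := PNat.eq (by rw [letter_coe]; push_cast; omega)
  conv_rhs => rw [← insert_erase h1]
  rw [rcPerm_insert (notMem_erase _ _), rcPerm_insert fun h => h5 (mem_of_mem_erase h),
    rcPerm_filter_le hcd, rcPerm_filter_not_le hcd, hletter]
  simp only [mul_assoc]
  rw [← mul_assoc (sP (i' + j)), sP_mul_rcPerm_readingIoc hi' h2 h3 h4, mul_assoc]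

theorem ladder_move_general (w : Equiv.Perm ℕ+)
    (D : Finset (ℕ+ × ℕ+)) (hD : D ∈ RCset w)
    (i j i' : ℕ+) (m : ℕ) (hi' : (i' : ℕ) + m + 1 = (i : ℕ))
    (h1 : (i, j) ∈ D) (h2 : (i, j + 1) ∉ D)
    (h3 : ∀ k : ℕ+, i' < k → k < i → (k, j) ∈ D ∧ (k, j + 1) ∈ D)
    (h4 : (i', j) ∉ D) (h5 : (i', j + 1) ∉ D) :
    insert (i', j + 1) (D.erase (i, j)) ∈ RCset w := by
  rw [RCset, Set.mem_ofPred_eq, isRCGraph_iff] at hD ⊢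
  refine ⟨(rcPerm_ladder_move hi' h1 h2 h3 h4 h5).trans hD.1, ?_⟩
  rw [card_insert_of_notMem fun h => h5 (mem_of_mem_erase h), card_erase_add_one h1, hD.2]

/-- A ladder move of size m: the cell (i,j) moves to (i−m−1, j+1), where rows
i−m,…,i−1 contain cells in both columns j, j+1, row i−m−1 contains neither, and
(i,j+1) ∉ D.  Here i' denotes i − m − 1 (so (i' : ℕ) + m + 1 = i).  The result is
again an rc-graph for the same permutation. -/
theorem ladder_move (w : Equiv.Perm ℕ+) (hw : {x | w x ≠ x}.Finite)
    (D : Finset (ℕ+ × ℕ+)) (hD : D ∈ RCset w)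
    (i j i' : ℕ+) (m : ℕ) (hi' : (i' : ℕ) + m + 1 = (i : ℕ))
    (h1 : (i, j) ∈ D) (h2 : (i, j + 1) ∉ D)
    (h3 : ∀ k : ℕ+, i' < k → k < i → (k, j) ∈ D ∧ (k, j + 1) ∈ D)
    (h4 : (i', j) ∉ D) (h5 : (i', j + 1) ∉ D) :
    insert (i', j + 1) (D.erase (i, j)) ∈ RCset w :=
  ladder_move_general w D hD i j i' m hi' h1 h2 h3 h4 h5
end
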